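/- arXiv:2205.08446 — 2 statements merged into one kernel-verified Lean document; each statement's English description precedes it below -/
import Mathlib

section
/- Let F : R^d → R^d be monotone and L-Lipschitz with 0 < γ ≤ √2/(3L). Given points x^k, x^{k+1}, x̃^{k-1}, x̃^k satisfying x̃^k = x^k - γ F(x̃^{k-1}) and x^{k+1} = x^k - γ F(x̃^k), one has ‖F(x^{k+1})‖² + 2‖F(x^{k+1}) - F(x̃^k)‖² ≤ ‖F(x^k)‖² + 2‖F(x^k) - F(x̃^{k-1})‖². -/
/-!
Write `a = F xᵏ`, `b = F x̃ᵏ`, `c = F xᵏ⁺¹`, `p = F x̃ᵏ⁻¹`. Since `xᵏ⁺¹ - xᵏ = -γ b`, monotonicity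
gives `⟪a - c, b⟫ ≥ 0`; since `xᵏ⁺¹ - x̃ᵏ = γ (p - b)`, the Lipschitz bound and `(γL)² ≤ 2/9` give
`‖c - b‖² ≤ 2/9 ‖p - b‖²`. The gap between the two potentials is then at least
`‖3a - b - 2p‖² / 3 ≥ 0`.
-/

open scoped RealInnerProductSpace

section

variable {E : Type*} [NormedAddCommGroup E] [InnerProductSpace ℝ E]

lemma inner_apply_sub_apply_sub_smul_nonneg {F : E → E} (hmono : ∀ x y, 0 ≤ ⟪F x - F y, x - y⟫)
    {γ : ℝ} (hγ : 0 < γ) (x u : E) : 0 ≤ ⟪F x - F (x - γ • u), u⟫ := by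
  have h := hmono (x - γ • u) x
  rw [sub_sub_cancel_left, inner_neg_right, real_inner_smul_right, ← mul_neg, ← inner_neg_left,
    neg_sub] at h
  exact nonneg_of_mul_nonneg_right h hγ

lemma norm_apply_sub_smul_sub_apply_sub_smul_le {F : E → E} {L : ℝ}
    (hLip : ∀ x y, ‖F x - F y‖ ≤ L * ‖x - y‖) {γ : ℝ} (hγ : 0 ≤ γ) (x u v : E) :
    ‖F (x - γ • u) - F (x - γ • v)‖ ≤ γ * L * ‖v - u‖ := by
  calc ‖F (x - γ • u) - F (x - γ • v)‖ ≤ L * ‖(x - γ • u) - (x - γ • v)‖ := hLip _ _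
    _ = γ * L * ‖v - u‖ := by
      rw [sub_sub_sub_cancel_left, ← smul_sub, norm_smul, Real.norm_of_nonneg hγ]; ring

lemma norm_sq_add_two_mul_norm_sub_sq_le (a b c p : E) (hinner : 0 ≤ ⟪a - c, b⟫)
    (hnorm : ‖c - b‖ ^ 2 ≤ 2 / 9 * ‖p - b‖ ^ 2) :
    ‖c‖ ^ 2 + 2 * ‖c - b‖ ^ 2 ≤ ‖a‖ ^ 2 + 2 * ‖a - p‖ ^ 2 := by
  have hc : ‖c‖ ^ 2 + 2 * ‖c - b‖ ^ 2 = 3 * ‖c - b‖ ^ 2 + 2 * ⟪c, b⟫ - ‖b‖ ^ 2 := by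
    rw [norm_sub_sq_real]; ring
  have ha : ‖a‖ ^ 2 + 2 * ‖a - p‖ ^ 2 =
      2 / 3 * ‖p - b‖ ^ 2 + 2 * ⟪a, b⟫ - ‖b‖ ^ 2 + ‖(3 : ℝ) • a - b - (2 : ℝ) • p‖ ^ 2 / 3 := by
    simp only [← real_inner_self_eq_norm_sq, inner_sub_left, inner_sub_right,
      real_inner_smul_left, real_inner_smul_right, real_inner_comm a, real_inner_comm p b]
    ring
  rw [inner_sub_left] at hinner
  nlinarith [sq_nonneg ‖(3 : ℝ) • a - b - (2 : ℝ) • p‖]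

end

lemma sq_mul_le_two_div_nine {γ L : ℝ} (hγpos : 0 < γ) (hγ : γ ≤ Real.sqrt 2 / (3 * L)) :
    (γ * L) ^ 2 ≤ 2 / 9 := by
  have hL : 0 < L := by
    by_contra! hL
    have : Real.sqrt 2 / (3 * L) ≤ 0 := div_nonpos_of_nonneg_of_nonpos (by positivity) (by linarith)
    linarith
  have hγL : γ * L ≤ Real.sqrt 2 / 3 := by
    rw [le_div_iff₀ (by positivity)] at hγ
    rw [le_div_iff₀ three_pos]
    linarith
  calc (γ * L) ^ 2 ≤ (Real.sqrt 2 / 3) ^ 2 := pow_le_pow_left₀ (by positivity) hγL 2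
    _ = 2 / 9 := by rw [div_pow, Real.sq_sqrt two_pos.le]; norm_num

theorem peg_potential_decrease_general (d : ℕ)
    (F : EuclideanSpace ℝ (Fin d) → EuclideanSpace ℝ (Fin d)) (L γ : ℝ)
    (hmono : ∀ x y, 0 ≤ ⟪F x - F y, x - y⟫)
    (hLip : ∀ x y, ‖F x - F y‖ ≤ L * ‖x - y‖)
    (hγpos : 0 < γ) (hγ : γ ≤ Real.sqrt 2 / (3 * L))
    (xk xk1 xtm xt : EuclideanSpace ℝ (Fin d))
    (hxt : xt = xk - γ • F xtm)
    (hxk1 : xk1 = xk - γ • F xt) :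
    ‖F xk1‖ ^ 2 + 2 * ‖F xk1 - F xt‖ ^ 2 ≤ ‖F xk‖ ^ 2 + 2 * ‖F xk - F xtm‖ ^ 2 := by
  have hinner : 0 ≤ ⟪F xk - F xk1, F xt⟫ := by
    rw [hxk1]; exact inner_apply_sub_apply_sub_smul_nonneg hmono hγpos xk (F xt)
  have hnorm : ‖F xk1 - F xt‖ ≤ γ * L * ‖F xtm - F xt‖ := by
    rw [hxk1, hxt]; exact norm_apply_sub_smul_sub_apply_sub_smul_le hLip hγpos.le xk _ _
  have hnorm_sq : ‖F xk1 - F xt‖ ^ 2 ≤ 2 / 9 * ‖F xtm - F xt‖ ^ 2 :=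
    calc ‖F xk1 - F xt‖ ^ 2 ≤ (γ * L * ‖F xtm - F xt‖) ^ 2 :=
          pow_le_pow_left₀ (norm_nonneg _) hnorm 2
      _ = (γ * L) ^ 2 * ‖F xtm - F xt‖ ^ 2 := by ring
      _ ≤ 2 / 9 * ‖F xtm - F xt‖ ^ 2 :=
          mul_le_mul_of_nonneg_right (sq_mul_le_two_div_nine hγpos hγ) (sq_nonneg _)
  exact norm_sq_add_two_mul_norm_sub_sq_le _ _ _ _ hinner hnorm_sq

theorem peg_potential_decrease (d : ℕ)
    (F : EuclideanSpace ℝ (Fin d) → EuclideanSpace ℝ (Fin d)) (L γ : ℝ)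
    (hL : 0 < L)
    (hmono : ∀ x y, 0 ≤ ⟪F x - F y, x - y⟫)
    (hLip : ∀ x y, ‖F x - F y‖ ≤ L * ‖x - y‖)
    (hγpos : 0 < γ) (hγ : γ ≤ Real.sqrt 2 / (3 * L))
    (xk xk1 xtm xt : EuclideanSpace ℝ (Fin d))
    (hxt : xt = xk - γ • F xtm)
    (hxk1 : xk1 = xk - γ • F xt) :
    ‖F xk1‖ ^ 2 + 2 * ‖F xk1 - F xt‖ ^ 2 ≤ ‖F xk‖ ^ 2 + 2 * ‖F xk - F xtm‖ ^ 2 :=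
  peg_potential_decrease_general d F L γ hmono hLip hγpos hγ xk xk1 xtm xt hxt hxk1
end

section
/- Let X ⊆ R^d be nonempty closed convex, F monotone and L-Lipschitz, γ > 0. Given a projected PEG step: x^k = proj_X[x^{k-1} - γ F(x̃^{k-1})], x̃^k = proj_X[x^k - γ F(x̃^{k-1})], x^{k+1} = proj_X[x^k - γ F(x̃^k)], and defining Ψ_k = ‖x^k - x^{k-1}‖² + ‖x^k - x^{k-1} - 2γ(F(x^k) - F(x̃^{k-1}))‖², the following holds: Ψ_{k+1} ≤ Ψ_k - (1 - 5L²γ²)‖x^{k+1} - x̃^k‖² - γ²‖F(x^{k+1}) - F(x̃^k)‖². -/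
/-!
Each projection `p` of `z` onto `X` satisfies `⟪z - p, y - p⟫ ≤ 0` for `y ∈ X`, and
monotonicity gives `⟪F x^{k+1} - F x^k, x^{k+1} - x^k⟫ ≥ 0`. An exact identity writes
`Ψ_{k+1} + ‖x^{k+1} - x̃^k‖² - Ψ_k - 4γ²‖F x^{k+1} - F x̃^k‖²` as a nonpositive combination of
these quantities minus two squares, so `Ψ_{k+1} + ‖x^{k+1} - x̃^k‖² ≤ Ψ_k + 4γ²‖F x^{k+1} - F x̃^k‖²`.
Lipschitz continuity then trades `5γ²‖F x^{k+1} - F x̃^k‖²` for `5L²γ²‖x^{k+1} - x̃^k‖²`.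
-/

open scoped RealInnerProductSpace

/-- `IsProjOn X z p` means `p` is the Euclidean projection of `z` onto `X`:
`p ∈ X` and `p` minimizes the distance to `z` over `X`. -/
def IsProjOn {d : ℕ} (X : Set (EuclideanSpace ℝ (Fin d))) (z p : EuclideanSpace ℝ (Fin d)) : Prop :=
  p ∈ X ∧ ∀ y ∈ X, ‖p - z‖ ≤ ‖y - z‖

theorem IsProjOn.inner_sub_le_zero {d : ℕ} {X : Set (EuclideanSpace ℝ (Fin d))}
    (hX : Convex ℝ X) {z p : EuclideanSpace ℝ (Fin d)} (hp : IsProjOn X z p) :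
    ∀ y ∈ X, ⟪z - p, y - p⟫ ≤ 0 := by
  have : Nonempty X := ⟨⟨p, hp.1⟩⟩
  refine (norm_eq_iInf_iff_real_inner_le_zero hX hp.1).1 (le_antisymm ?_ ?_)
  · refine le_ciInf fun w => ?_
    rw [norm_sub_rev z, norm_sub_rev z]
    exact hp.2 w w.2
  · have hbdd : BddBelow (Set.range fun w : X => ‖z - w‖) :=
      ⟨0, Set.forall_mem_range.2 fun _ => norm_nonneg _⟩
    exact ciInf_le hbdd ⟨p, hp.1⟩

section

variable {E : Type*} [NormedAddCommGroup E] [InnerProductSpace ℝ E]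

/-- The potential `Ψ_{k+1}` of the paper is `pegPotential F γ x^k x̃^k x^{k+1}`. -/
def pegPotential (F : E → E) (γ : ℝ) (x y x' : E) : ℝ :=
  ‖x' - x‖ ^ 2 + ‖x' - x - (2 * γ) • (F x' - F y)‖ ^ 2

theorem pegPotential_succ_add_sub_eq (F : E → E) (γ : ℝ) (x₀ x₁ x₂ y₀ y₁ : E) :
    pegPotential F γ x₁ y₁ x₂ + ‖x₂ - y₁‖ ^ 2 - pegPotential F γ x₀ y₀ x₁
        - 4 * γ ^ 2 * ‖F x₂ - F y₁‖ ^ 2 =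
      2 * ⟪(x₀ - γ • F y₀) - x₁, y₁ - x₁⟫ + 2 * ⟪(x₀ - γ • F y₀) - x₁, x₂ - x₁⟫
        + 2 * ⟪(x₁ - γ • F y₀) - y₁, x₂ - y₁⟫ + 4 * ⟪(x₁ - γ • F y₁) - x₂, x₁ - x₂⟫
        - 4 * γ * ⟪F x₂ - F x₁, x₂ - x₁⟫
        - ‖(2 : ℝ) • (x₁ - x₀) + (x₁ - x₂) + (x₁ - y₁) + (2 * γ) • (F y₀ - F x₁)‖ ^ 2 / 2
        - ‖x₂ - y₁ - (2 * γ) • (F y₀ - F x₁)‖ ^ 2 / 2 := by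
  simp only [pegPotential, ← real_inner_self_eq_norm_sq, inner_sub_left, inner_sub_right,
    inner_add_left, inner_add_right, real_inner_smul_left, real_inner_smul_right]
  -- a permutation lemma: simp only uses it to put each inner product in a fixed order
  simp only [real_inner_comm]
  ring

end

theorem pegPotential_succ_add_le {d : ℕ} {X : Set (EuclideanSpace ℝ (Fin d))}
    (hX : Convex ℝ X) {F : EuclideanSpace ℝ (Fin d) → EuclideanSpace ℝ (Fin d)}
    (hmono : ∀ x y, 0 ≤ ⟪F x - F y, x - y⟫) {γ : ℝ} (hγ : 0 ≤ γ)
    {x₀ x₁ x₂ y₀ y₁ : EuclideanSpace ℝ (Fin d)}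
    (hx₁ : IsProjOn X (x₀ - γ • F y₀) x₁) (hy₁ : IsProjOn X (x₁ - γ • F y₀) y₁)
    (hx₂ : IsProjOn X (x₁ - γ • F y₁) x₂) :
    pegPotential F γ x₁ y₁ x₂ + ‖x₂ - y₁‖ ^ 2 ≤
      pegPotential F γ x₀ y₀ x₁ + 4 * γ ^ 2 * ‖F x₂ - F y₁‖ ^ 2 := by
  linarith [pegPotential_succ_add_sub_eq F γ x₀ x₁ x₂ y₀ y₁,
    hx₁.inner_sub_le_zero hX y₁ hy₁.1, hx₁.inner_sub_le_zero hX x₂ hx₂.1,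
    hy₁.inner_sub_le_zero hX x₂ hx₂.1, hx₂.inner_sub_le_zero hX x₁ hx₁.1,
    mul_nonneg hγ (hmono x₂ x₁),
    sq_nonneg ‖(2 : ℝ) • (x₁ - x₀) + (x₁ - x₂) + (x₁ - y₁) + (2 * γ) • (F y₀ - F x₁)‖,
    sq_nonneg ‖x₂ - y₁ - (2 * γ) • (F y₀ - F x₁)‖]

theorem proj_peg_key_lemma_general (d : ℕ) (X : Set (EuclideanSpace ℝ (Fin d)))
    (hXconv : Convex ℝ X)
    (F : EuclideanSpace ℝ (Fin d) → EuclideanSpace ℝ (Fin d)) (L γ : ℝ)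
    (hmono : ∀ x y, 0 ≤ ⟪F x - F y, x - y⟫)
    (hLip : ∀ x y, ‖F x - F y‖ ≤ L * ‖x - y‖)
    (hγ : 0 < γ)
    (xkm xk xk1 xtm xt : EuclideanSpace ℝ (Fin d))
    (hxk : IsProjOn X (xkm - γ • F xtm) xk)
    (hxt : IsProjOn X (xk - γ • F xtm) xt)
    (hxk1 : IsProjOn X (xk - γ • F xt) xk1) :
    ‖xk1 - xk‖ ^ 2 + ‖xk1 - xk - (2 * γ) • (F xk1 - F xt)‖ ^ 2 ≤
      ‖xk - xkm‖ ^ 2 + ‖xk - xkm - (2 * γ) • (F xk - F xtm)‖ ^ 2 -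
        (1 - 5 * L ^ 2 * γ ^ 2) * ‖xk1 - xt‖ ^ 2 - γ ^ 2 * ‖F xk1 - F xt‖ ^ 2 := by
  have hcore := pegPotential_succ_add_le hXconv hmono hγ.le hxk hxt hxk1
  have hLip_sq : ‖F xk1 - F xt‖ ^ 2 ≤ L ^ 2 * ‖xk1 - xt‖ ^ 2 := by
    rw [← mul_pow]
    exact pow_le_pow_left₀ (norm_nonneg _) (hLip xk1 xt) 2
  unfold pegPotential at hcore
  linarith [mul_le_mul_of_nonneg_left hLip_sq (sq_nonneg γ)]

theorem proj_peg_key_lemma (d : ℕ) (X : Set (EuclideanSpace ℝ (Fin d)))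
    (hX : X.Nonempty) (hXc : IsClosed X) (hXconv : Convex ℝ X)
    (F : EuclideanSpace ℝ (Fin d) → EuclideanSpace ℝ (Fin d)) (L γ : ℝ)
    (hmono : ∀ x y, 0 ≤ ⟪F x - F y, x - y⟫)
    (hLip : ∀ x y, ‖F x - F y‖ ≤ L * ‖x - y‖)
    (hγ : 0 < γ)
    (xkm xk xk1 xtm xt : EuclideanSpace ℝ (Fin d))
    (hxk : IsProjOn X (xkm - γ • F xtm) xk)
    (hxt : IsProjOn X (xk - γ • F xtm) xt)
    (hxk1 : IsProjOn X (xk - γ • F xt) xk1) :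
    ‖xk1 - xk‖ ^ 2 + ‖xk1 - xk - (2 * γ) • (F xk1 - F xt)‖ ^ 2 ≤
      ‖xk - xkm‖ ^ 2 + ‖xk - xkm - (2 * γ) • (F xk - F xtm)‖ ^ 2 -
        (1 - 5 * L ^ 2 * γ ^ 2) * ‖xk1 - xt‖ ^ 2 - γ ^ 2 * ‖F xk1 - F xt‖ ^ 2 :=
  proj_peg_key_lemma_general d X hXconv F L γ hmono hLip hγ xkm xk xk1 xtm xt hxk hxt hxk1
end
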